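/- arXiv:1402.2496 — 2 statements merged into one kernel-verified Lean document; each statement's English description precedes it below -/
import Mathlib

section
/- Let G be a connected graph, T a spanning tree of G with maximum degree k, and let B be the set of vertices of T having degree k or k−1 in T. If removing B from T yields a forest such that no edge of G connects two vertices in different components of this forest and all edges of G leaving a component go to B, then opt(G) ≥ k − 1. More precisely: if every edge of G not in T either has an endpoint in B or joins two vertices of the same component of T − B, then every spanning tree of G has maximum degree at least k − 1. -/
open SimpleGraph

/-- `T` is a spanning tree of `G`. -/
def IsSpanningTree {V : Type*} (G T : SimpleGraph V) : Prop :=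
  T ≤ G ∧ T.IsTree

/-- The maximum vertex degree of a graph on a finite vertex set. -/
noncomputable def maxDeg {V : Type*} [Fintype V] (T : SimpleGraph V) : ℕ :=
  Finset.univ.sup fun v => (T.neighborSet v).ncard

/-- The forest `T − B` obtained from `T` by deleting the vertices of `B`
(and their incident edges). -/
def forestMinus {V : Type*} (T : SimpleGraph V) (B : V → Prop) : SimpleGraph V :=
  SimpleGraph.fromRel fun u v => T.Adj u v ∧ ¬ B u ∧ ¬ B v

/-!
Let `n = |V|`, `F = T − B` and suppose some spanning tree `T'` has maximum degree `≤ k − 2`.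
The `n − 1` edges of `T` split into the edges of `F` and the edges meeting `B`. As `T` restricted
to the nonempty set `B` is a forest, fewer than `|B|` edges lie inside `B`, so more than
`∑_{b ∈ B} deg_T b − |B| ≥ |B| (k − 2)` edges of `T` meet `B`; thus `n − 1 − |E(F)| > |B| (k − 2)`.
On the other hand, by hypothesis every edge of `T'` avoiding `B` joins two vertices of the same
component of `F`, so `F` together with the edges of `T'` meeting `B` is connected, whence
`n − 1 ≤ |E(F)| + ∑_{b ∈ B} deg_{T'} b ≤ |E(F)| + |B| (k − 2)`.
-/

open Finset

section

variable {V : Type*}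

namespace SimpleGraph

section Counting

variable [Fintype V] [DecidableEq V] (H : SimpleGraph V) [DecidableRel H.Adj]

def edgesMeeting (s : Finset V) : Finset (Sym2 V) := {e ∈ H.edgeFinset | ∃ x ∈ e, x ∈ s}

def edgesWithin (s : Finset V) : Finset (Sym2 V) := {e ∈ H.edgeFinset | ∀ x ∈ e, x ∈ s}

theorem sum_degree_eq_card_edgesMeeting_add_card_edgesWithin (s : Finset V) :
    ∑ v ∈ s, H.degree v = #(H.edgesMeeting s) + #(H.edgesWithin s) := by
  have hcount : ∀ e ∈ H.edgeFinset, #{v ∈ s | v ∈ e} =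
      (if ∃ x ∈ e, x ∈ s then 1 else 0) + (if ∀ x ∈ e, x ∈ s then 1 else 0) := by
    intro e he
    induction e using Sym2.ind with
    | _ a b =>
      have hab : a ≠ b := H.ne_of_adj (H.mem_edgeFinset.1 he)
      by_cases ha : a ∈ s <;> by_cases hb : b ∈ s <;>
        simp [Finset.filter_or, Finset.filter_eq', ha, hb, hab]
  simp_rw [← card_incidenceFinset_eq_degree, incidenceFinset_eq_filter]
  rw [edgesMeeting, edgesWithin, card_filter, card_filter, ← sum_add_distrib,
    ← sum_congr rfl hcount]
  exact sum_card_bipartiteAbove_eq_sum_card_bipartiteBelow (r := fun v e => v ∈ e)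

theorem card_edgesMeeting_le_sum_degree (s : Finset V) :
    #(H.edgesMeeting s) ≤ ∑ v ∈ s, H.degree v := by
  rw [sum_degree_eq_card_edgesMeeting_add_card_edgesWithin]
  exact Nat.le_add_right _ _

end Counting

theorem IsAcyclic.card_edgeFinset_lt [Fintype V] [Nonempty V] {H : SimpleGraph V}
    [Fintype H.edgeSet] (hH : H.IsAcyclic) : #H.edgeFinset < Fintype.card V := by
  obtain ⟨T, hHT, -, hT⟩ := connected_top.exists_isTree_le_of_le_of_isAcyclic le_top hH
  classical
  rw [← hT.card_edgeFinset]
  exact Nat.lt_succ_of_le (card_le_card (edgeFinset_mono hHT))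

theorem IsAcyclic.card_edgesWithin_lt [Fintype V] [DecidableEq V] {H : SimpleGraph V}
    [DecidableRel H.Adj] (hH : H.IsAcyclic) {s : Finset V} (hs : s.Nonempty) :
    #(H.edgesWithin s) < #s := by
  classical
  have : Nonempty s := hs.to_subtype
  have hsub : H.edgesWithin s ⊆ (H.induce (s : Set V)).edgeFinset.image (Sym2.map (↑)) := by
    intro e he
    induction e using Sym2.ind with
    | _ a b =>
      simp only [edgesWithin, mem_filter, mem_edgeFinset, mem_edgeSet, Sym2.mem_iff,
        forall_eq_or_imp, forall_eq] at he
      exact mem_image.2 ⟨s(⟨a, he.2.1⟩, ⟨b, he.2.2⟩), by simpa using he.1, rfl⟩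
  calc #(H.edgesWithin s) ≤ #((H.induce (s : Set V)).edgeFinset) :=
        (card_le_card hsub).trans card_image_le
    _ < Fintype.card (s : Set V) := (hH.induce _).card_edgeFinset_lt
    _ = #s := by simp

theorem IsAcyclic.sum_degree_lt [Fintype V] [DecidableEq V] {H : SimpleGraph V}
    [DecidableRel H.Adj] (hH : H.IsAcyclic) {s : Finset V} (hs : s.Nonempty) :
    ∑ v ∈ s, H.degree v < #(H.edgesMeeting s) + #s := by
  rw [sum_degree_eq_card_edgesMeeting_add_card_edgesWithin]
  have := hH.card_edgesWithin_lt hs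
  omega

theorem Connected.card_le_card_edgeFinset_add_card_add_one [Fintype V] [DecidableEq V]
    {G F : SimpleGraph V} [DecidableRel F.Adj] (hG : G.Connected) (S : Finset (Sym2 V))
    (hS : ∀ u v, G.Adj u v → s(u, v) ∉ S → F.Reachable u v) :
    Fintype.card V ≤ #F.edgeFinset + #S + 1 := by
  classical
  set H := F ⊔ fromEdgeSet (S : Set (Sym2 V))
  have hH : H.Connected := by
    have := hG.nonempty
    refine ⟨fun u v => ?_⟩
    rw [reachable_iff_reflTransGen]
    refine Relation.reflTransGen_closed (fun a b hab => ?_) u v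
      ((reachable_iff_reflTransGen _ _).1 (hG.preconnected u v))
    rw [← reachable_iff_reflTransGen]
    by_cases he : s(a, b) ∈ S
    · exact Adj.reachable (by simp [H, he, hab.ne])
    · exact (hS a b hab he).mono le_sup_left
  have hcard : #H.edgeFinset ≤ #F.edgeFinset + #S := by
    rw [edgeFinset_sup]
    refine (card_union_le _ _).trans (Nat.add_le_add_left (card_le_card ?_) _)
    intro e he
    rw [mem_edgeFinset, edgeSet_fromEdgeSet] at he
    exact he.1
  have := hH.card_vert_le_card_edgeSet_add_one
  rw [Nat.card_eq_fintype_card, Nat.card_eq_fintype_card, ← edgeFinset_card] at this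
  omega

theorem ncard_neighborSet_eq_degree (H : SimpleGraph V) (v : V) [Fintype (H.neighborSet v)] :
    (H.neighborSet v).ncard = H.degree v := by
  rw [← card_neighborSet_eq_degree, ← Nat.card_eq_fintype_card, Nat.card_coe_set_eq]

end SimpleGraph

theorem forestMinus_adj {T : SimpleGraph V} {B : V → Prop} {u v : V} :
    (forestMinus T B).Adj u v ↔ T.Adj u v ∧ ¬B u ∧ ¬B v := by
  rw [forestMinus, fromRel_adj]
  constructor
  · rintro ⟨-, huv | ⟨hvu, hv, hu⟩⟩
    exacts [huv, ⟨hvu.symm, hu, hv⟩]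
  · rintro huv
    exact ⟨huv.1.ne, Or.inl huv⟩

theorem card_edgeFinset_forestMinus_add_card_edgesMeeting [Fintype V] [DecidableEq V]
    (T : SimpleGraph V) [DecidableRel T.Adj] (s : Finset V)
    [DecidableRel (forestMinus T (· ∈ s)).Adj] :
    #(forestMinus T (· ∈ s)).edgeFinset + #(T.edgesMeeting s) = #T.edgeFinset := by
  have : (forestMinus T (· ∈ s)).edgeFinset = {e ∈ T.edgeFinset | ¬∃ x ∈ e, x ∈ s} := by
    ext e
    induction e using Sym2.ind with
    | _ a b => simp [forestMinus_adj]
  rw [this, add_comm, edgesMeeting, card_filter_add_card_filter_not]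

theorem reachable_forestMinus_of_notMem_edgesMeeting [Fintype V] [DecidableEq V]
    {G G' T : SimpleGraph V} [DecidableRel G'.Adj] {s : Finset V} (hG' : G' ≤ G)
    (h : ∀ u v, G.Adj u v → ¬ T.Adj u v → u ∈ s ∨ v ∈ s ∨ (forestMinus T (· ∈ s)).Reachable u v)
    {u v : V} (huv : G'.Adj u v) (hnot : s(u, v) ∉ G'.edgesMeeting s) :
    (forestMinus T (· ∈ s)).Reachable u v := by
  simp only [edgesMeeting, mem_filter, mem_edgeFinset, mem_edgeSet, huv, true_and,
    Sym2.mem_iff, or_and_right, exists_or, exists_eq_left, not_or] at hnot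
  by_cases hT : T.Adj u v
  · exact (forestMinus_adj.2 ⟨hT, hnot⟩).reachable
  · exact ((h u v (hG' huv) hT).resolve_left hnot.1).resolve_left hnot.2

theorem degree_le_maxDeg [Fintype V] (T : SimpleGraph V) [DecidableRel T.Adj] (v : V) :
    T.degree v ≤ maxDeg T := by
  rw [← ncard_neighborSet_eq_degree]
  exact Finset.le_sup (f := fun v => (T.neighborSet v).ncard) (mem_univ v)

theorem exists_ncard_neighborSet_eq_maxDeg [Fintype V] [Nonempty V] (T : SimpleGraph V) :
    ∃ v, (T.neighborSet v).ncard = maxDeg T := by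
  obtain ⟨v, -, hv⟩ := exists_mem_eq_sup univ univ_nonempty fun v => (T.neighborSet v).ncard
  exact ⟨v, hv.symm⟩

end

theorem opt_ge_k_sub_one_general {V : Type*} [Fintype V]
    (G T : SimpleGraph V) (k : ℕ)
    (hT : IsSpanningTree G T) (hk : maxDeg T = k)
    (B : V → Prop) (hB : ∀ v, B v ↔ k - 1 ≤ (T.neighborSet v).ncard)
    (h : ∀ u v, G.Adj u v → ¬ T.Adj u v →
      B u ∨ B v ∨ (forestMinus T B).Reachable u v) :
    ∀ T' : SimpleGraph V, IsSpanningTree G T' → k - 1 ≤ maxDeg T' := by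
  classical
  rintro T' ⟨hT'G, hT'⟩
  by_contra! hlt
  obtain ⟨s, rfl⟩ : ∃ s : Finset V, B = (· ∈ s) := ⟨univ.filter B, by ext; simp⟩
  have := hT.2.connected.nonempty
  obtain ⟨b, hb⟩ := exists_ncard_neighborSet_eq_maxDeg T
  have hs : s.Nonempty := ⟨b, (hB b).2 (by omega)⟩
  have hT_deg : #s * (k - 1) ≤ ∑ v ∈ s, T.degree v :=
    card_nsmul_le_sum _ _ _ fun v hv => by rw [← ncard_neighborSet_eq_degree]; exact (hB v).1 hv
  have hT'_deg : ∑ v ∈ s, T'.degree v ≤ #s * (k - 2) :=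
    sum_le_card_nsmul _ _ _ fun v _ => by have := degree_le_maxDeg T' v; omega
  have hT_forest := hT.2.isAcyclic.sum_degree_lt hs
  have hT_split := card_edgeFinset_forestMinus_add_card_edgesMeeting T s
  have hT_card := hT.2.card_edgeFinset
  have hT'_meet := T'.card_edgesMeeting_le_sum_degree s
  have hT'_conn := hT'.connected.card_le_card_edgeFinset_add_card_add_one
    (F := forestMinus T (· ∈ s)) (T'.edgesMeeting s)
    fun _ _ => reachable_forestMinus_of_notMem_edgesMeeting hT'G h
  obtain ⟨j, rfl⟩ : ∃ j, k = j + 2 := ⟨k - 2, by omega⟩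
  simp only [Nat.add_sub_cancel, show j + 2 - 1 = j + 1 by omega, Nat.mul_succ] at hT_deg hT'_deg
  omega

/-- Lower-bound lemma: let `T` be a spanning tree of `G` of maximum degree `k ≥ 2` and
let `B` be the set of vertices of degree ≥ `k−1` in `T`.  If every edge of `G` not in `T`
either has an endpoint in `B` or joins two vertices in the same component of `T − B`,
then every spanning tree of `G` has maximum degree at least `k − 1`. -/
theorem opt_ge_k_sub_one {V : Type*} [Fintype V]
    (G T : SimpleGraph V) (k : ℕ) (hk2 : 2 ≤ k)
    (hG : G.Connected) (hT : IsSpanningTree G T) (hk : maxDeg T = k)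
    (B : V → Prop) (hB : ∀ v, B v ↔ k - 1 ≤ (T.neighborSet v).ncard)
    (h : ∀ u v, G.Adj u v → ¬ T.Adj u v →
      B u ∨ B v ∨ (forestMinus T B).Reachable u v) :
    ∀ T' : SimpleGraph V, IsSpanningTree G T' → k - 1 ≤ maxDeg T' :=
  opt_ge_k_sub_one_general G T k hT hk B hB h
end

section
/- Let G be a finite simple connected graph on n vertices with diameter D, let r ∈ V be fixed, and consider the following process on parent assignments: initially the vertex set is partitioned into rooted trees (a spanning forest), each tree labeled by the id of its root, and r is the root of its tree with the minimum id over all of V. At each round, every vertex v adjacent (in G) to a vertex in a tree with smaller root-id than its own re-attaches as a child of such a neighbor belonging to the tree with minimum root-id among its neighbors, and adopts that root-id. Then after at most D rounds, all vertices belong to the tree rooted at r, and the parent assignment forms a single spanning tree of G. -/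
open SimpleGraph

/-- The 1-factor induced by a parent assignment `p : V → Option V`. -/
def parentGraph {V : Type*} (p : V → Option V) : SimpleGraph V :=
  SimpleGraph.fromEdgeSet {e | ∃ v u, p v = some u ∧ e = s(v, u)}

/-!
The minimum id `m = idf r` bounds every root-id from below at all times, since a vertex only ever
adopts a neighbour's root-id; hence a vertex carrying `m` is never enabled again and is frozen.
If some neighbour of `v` carries `m` at round `t`, then `v` carries `m` at round `t + 1`, so `m`
spreads along a shortest walk to `r` one edge per round and covers `G` within `D` rounds.
A vertex that adopts `m` attaches to a neighbour already carrying it, so by induction on rounds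
every vertex carrying `m` has a parent chain to `r` through frozen vertices (at round `0` this is
the initial tree of `r`, the only tree labelled `m`). A parent assignment in which every vertex
reaches the root `r` along parent pointers has no cycles, and its parent graph is a spanning tree.
-/

open Relation

lemma wellFounded_of_not_transGen_self {α : Type*} [Finite α] {R : α → α → Prop}
    (h : ∀ a, ¬ TransGen R a a) : WellFounded R :=
  haveI : Std.Irrefl (TransGen R) := ⟨h⟩
  Subrelation.wf TransGen.single (Finite.wellFounded_of_trans_of_irrefl _)

section ParentAssignment

variable {V : Type*}

abbrev IsParent (p : V → Option V) (v u : V) : Prop := p v = some u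

variable {p : V → Option V}

lemma parentGraph_adj {a b : V} :
    (parentGraph p).Adj a b ↔ (p a = some b ∨ p b = some a) ∧ a ≠ b := by
  simp only [parentGraph, fromEdgeSet_adj, Set.mem_ofPred_eq, Sym2.eq_iff]
  aesop

lemma exists_iterate_bind_eq_of_reflTransGen {v w : V} (h : ReflTransGen (IsParent p) v w) :
    ∃ k, (fun o : Option V => o.bind p)^[k] (some v) = some w := by
  induction h using ReflTransGen.head_induction_on with
  | refl => exact ⟨0, rfl⟩
  | head hab _ ih =>
    obtain ⟨k, hk⟩ := ih
    exact ⟨k + 1, by rwa [Function.iterate_succ_apply, Option.bind_some, hab]⟩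

lemma exists_iterate_bind_eq_of_transGen {v w : V} (h : TransGen (IsParent p) v w) :
    ∃ k, 0 < k ∧ (fun o : Option V => o.bind p)^[k] (some v) = some w := by
  obtain ⟨u, hvu, huw⟩ := TransGen.head'_iff.mp h
  obtain ⟨k, hk⟩ := exists_iterate_bind_eq_of_reflTransGen huw
  exact ⟨k + 1, k.succ_pos, by rwa [Function.iterate_succ_apply, Option.bind_some, hvu]⟩

lemma exists_root_of_forall_not_transGen [Finite V] {α : Type*} {φ : V → α}
    (hacyc : ∀ v, ¬ TransGen (IsParent p) v v) (hφ : ∀ v u, p v = some u → φ v = φ u)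
    (v : V) :
    ∃ w, p w = none ∧ φ v = φ w ∧ ReflTransGen (fun a b => p a = some b ∧ φ a = φ v) v w := by
  have hwf : WellFounded (flip (IsParent p)) :=
    wellFounded_of_not_transGen_self fun v hv => hacyc v (transGen_swap.mp hv)
  induction v using hwf.induction with
  | _ v ih =>
  cases hv : p v with
  | none => exact ⟨v, hv, rfl, .refl⟩
  | some u =>
    obtain ⟨w, hw, huw, hchain⟩ := ih u hv
    rw [← hφ v u hv] at hchain
    exact ⟨w, hw, (hφ v u hv).trans huw, .head ⟨hv, rfl⟩ hchain⟩

lemma not_transGen_self_of_reflTransGen {r v : V} (hr : p r = none)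
    (hv : ReflTransGen (IsParent p) v r) : ¬ TransGen (IsParent p) v v := by
  induction hv using ReflTransGen.head_induction_on with
  | refl =>
    intro h
    obtain ⟨c, hrc, -⟩ := TransGen.head'_iff.mp h
    exact Option.some_ne_none c (hrc.symm.trans hr)
  | head hab _ ih =>
    intro h
    obtain ⟨c, hac, hca⟩ := TransGen.head'_iff.mp h
    cases Option.some_injective _ (hab.symm.trans hac)
    exact ih (TransGen.tail' hca hab)

theorem parentGraph_isAcyclic (hwf : WellFounded (IsParent p)) : (parentGraph p).IsAcyclic := by
  classical
  intro v c hc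
  obtain ⟨v₀, hv₀, hchild⟩ := hwf.has_min {x | x ∈ c.support} ⟨v, c.start_mem_support⟩
  have hc' := hc.rotate hv₀
  have hparent : ∀ w ∈ (c.rotate v₀ hv₀).support, (parentGraph p).Adj v₀ w → p v₀ = some w :=
    fun w hw hadj => (parentGraph_adj.mp hadj).1.resolve_right
      (hchild w ((c.mem_support_rotate_iff v₀ hv₀).mp hw))
  have hsnd := hparent _ (Walk.getVert_mem_support _ _) (Walk.adj_snd hc'.not_nil)
  have hpen := hparent _ (Walk.getVert_mem_support _ _) (Walk.adj_penultimate hc'.not_nil).symm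
  exact hc'.snd_ne_penultimate (Option.some_injective _ (hsnd.symm.trans hpen))

theorem isSpanningTree_parentGraph [Finite V] {G : SimpleGraph V} {r : V}
    (hG : ∀ v u, p v = some u → G.Adj v u) (hr : p r = none)
    (hreach : ∀ v, ReflTransGen (IsParent p) v r) : IsSpanningTree G (parentGraph p) := by
  refine ⟨fun a b hab => ?_, ?_, ?_⟩
  · rcases (parentGraph_adj.mp hab).1 with h | h
    exacts [hG a b h, (hG b a h).symm]
  · refine (connected_iff_exists_forall_reachable _).mpr ⟨r, fun v => Reachable.symm ?_⟩
    refine (reachable_iff_reflTransGen v r).mpr (ReflTransGen.mono ?_ _ _ (hreach v))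
    exact fun a b hab => parentGraph_adj.mpr ⟨.inl hab, (hG a b hab).ne⟩
  · exact parentGraph_isAcyclic <| wellFounded_of_not_transGen_self fun v =>
      not_transGen_self_of_reflTransGen hr (hreach v)

end ParentAssignment

section MergingRun

variable {V : Type*}

/-- Synchronous execution of rule `R_Forest`: `par t` and `rid t` are the parent pointers and
root-ids after `t` rounds. -/
structure IsMergingRun (G : SimpleGraph V) (par : ℕ → V → Option V) (rid : ℕ → V → ℕ) :
    Prop where
  update : ∀ t v, (∃ u, G.Adj v u ∧ rid t u < rid t v) →
    ∃ u, G.Adj v u ∧ (∀ u', G.Adj v u' → rid t u ≤ rid t u') ∧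
      par (t + 1) v = some u ∧ rid (t + 1) v = rid t u
  stay : ∀ t v, ¬ (∃ u, G.Adj v u ∧ rid t u < rid t v) →
    par (t + 1) v = par t v ∧ rid (t + 1) v = rid t v

namespace IsMergingRun

variable {G : SimpleGraph V} {par : ℕ → V → Option V} {rid : ℕ → V → ℕ} {m : ℕ}

lemma le_rid (run : IsMergingRun G par rid) (h0 : ∀ v, m ≤ rid 0 v) : ∀ t v, m ≤ rid t v := by
  intro t
  induction t with
  | zero => exact h0
  | succ t ih =>
    intro v
    by_cases hen : ∃ u, G.Adj v u ∧ rid t u < rid t v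
    · obtain ⟨u, -, -, -, hvu⟩ := run.update t v hen
      exact hvu ▸ ih u
    · exact (run.stay t v hen).2 ▸ ih v

lemma stay_of_rid_eq (run : IsMergingRun G par rid) (hmin : ∀ t u, m ≤ rid t u) {t : ℕ} {v : V}
    (hv : rid t v = m) : par (t + 1) v = par t v ∧ rid (t + 1) v = m := by
  obtain ⟨hpar, hrid⟩ := run.stay t v fun ⟨u, _, hlt⟩ => (hmin t u).not_gt (hv ▸ hlt)
  exact ⟨hpar, hrid.trans hv⟩

lemma stay_of_rid_eq_of_le (run : IsMergingRun G par rid) (hmin : ∀ t u, m ≤ rid t u)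
    {t s : ℕ} {v : V} (hts : t ≤ s) (hv : rid t v = m) : par s v = par t v ∧ rid s v = m := by
  induction s, hts using Nat.le_induction with
  | base => exact ⟨rfl, hv⟩
  | succ s _ ih =>
    obtain ⟨hpar, hrid⟩ := run.stay_of_rid_eq hmin ih.2
    exact ⟨hpar.trans ih.1, hrid⟩

lemma rid_succ_eq_of_adj (run : IsMergingRun G par rid) (hmin : ∀ t u, m ≤ rid t u)
    {t : ℕ} {v u : V} (hadj : G.Adj v u) (hu : rid t u = m) : rid (t + 1) v = m := by
  by_cases hen : ∃ u, G.Adj v u ∧ rid t u < rid t v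
  · obtain ⟨u', -, hle, -, hv⟩ := run.update t v hen
    exact hv.trans (le_antisymm (hu ▸ hle u hadj) (hmin t u'))
  · rw [(run.stay t v hen).2]
    simp only [not_exists, not_and, not_lt] at hen
    exact le_antisymm (hu ▸ hen u hadj) (hmin t v)

lemma rid_walk_length_eq (run : IsMergingRun G par rid) (hmin : ∀ t u, m ≤ rid t u) {r : V}
    (hr : rid 0 r = m) : ∀ {v : V} (q : G.Walk v r), rid q.length v = m
  | _, .nil => hr
  | _, .cons hadj q => run.rid_succ_eq_of_adj hmin hadj (run.rid_walk_length_eq hmin hr q)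

lemma adj_of_par_eq_some (run : IsMergingRun G par rid)
    (h0 : ∀ v u, par 0 v = some u → G.Adj v u) : ∀ t v u, par t v = some u → G.Adj v u := by
  intro t
  induction t with
  | zero => exact h0
  | succ t ih =>
    intro v u hvu
    by_cases hen : ∃ u, G.Adj v u ∧ rid t u < rid t v
    · obtain ⟨u', hadj, -, hvu', -⟩ := run.update t v hen
      exact Option.some_injective _ (hvu'.symm.trans hvu) ▸ hadj
    · exact ih v u ((run.stay t v hen).1 ▸ hvu)

/-- The chains are through vertices carrying `m`, which are frozen, so they survive later rounds. -/
lemma reflTransGen_of_rid_eq (run : IsMergingRun G par rid) (hmin : ∀ t u, m ≤ rid t u)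
    {r : V} (h0 : ∀ v, rid 0 v = m → ReflTransGen (fun a b => par 0 a = some b ∧ rid 0 a = m) v r) :
    ∀ t v, rid t v = m → ReflTransGen (fun a b => par t a = some b ∧ rid t a = m) v r := by
  intro t
  induction t with
  | zero => exact h0
  | succ t ih =>
    have hmono : ∀ {v}, ReflTransGen (fun a b => par t a = some b ∧ rid t a = m) v r →
        ReflTransGen (fun a b => par (t + 1) a = some b ∧ rid (t + 1) a = m) v r :=
      ReflTransGen.mono (fun a b ⟨hab, ha⟩ =>
        ⟨(run.stay_of_rid_eq hmin ha).1.trans hab, (run.stay_of_rid_eq hmin ha).2⟩) _ _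
    intro v hv
    by_cases hen : ∃ u, G.Adj v u ∧ rid t u < rid t v
    · obtain ⟨u, -, -, hvu, hrid⟩ := run.update t v hen
      exact .head ⟨hvu, hv⟩ (hmono (ih u (hrid.symm.trans hv)))
    · exact hmono (ih v ((run.stay t v hen).2.symm.trans hv))

end IsMergingRun

end MergingRun

theorem treeandlead_merging_converges_general {V : Type*} [Fintype V]
    (G : SimpleGraph V) (hG : G.Connected)
    (idf : V → ℕ) (hinj : Function.Injective idf)
    (r : V) (hrmin : ∀ v, idf r ≤ idf v)
    (D : ℕ) (hD : ∀ a b : V, G.dist a b ≤ D)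
    (par : ℕ → V → Option V) (rid : ℕ → V → ℕ)
    -- initial state: a spanning forest, each tree labeled by its root's id
    (h0cyc : ∀ (v : V) (k : ℕ), 0 < k →
      (fun o : Option V => o.bind (par 0))^[k] (some v) ≠ some v)
    (h0adj : ∀ v u, par 0 v = some u → G.Adj v u)
    (h0rid : ∀ v u, par 0 v = some u → rid 0 v = rid 0 u)
    (h0root : ∀ v, par 0 v = none → rid 0 v = idf v)
    (h0r : par 0 r = none)
    -- synchronous update rule: every enabled vertex re-attaches to a neighbor of
    -- minimum root-id among its neighbors
    (hupd : ∀ t v, (∃ u, G.Adj v u ∧ rid t u < rid t v) →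
      ∃ u, G.Adj v u ∧ (∀ u', G.Adj v u' → rid t u ≤ rid t u') ∧
        par (t + 1) v = some u ∧ rid (t + 1) v = rid t u)
    (hstay : ∀ t v, ¬ (∃ u, G.Adj v u ∧ rid t u < rid t v) →
      par (t + 1) v = par t v ∧ rid (t + 1) v = rid t v) :
    (∀ v, rid D v = idf r) ∧
    (∀ v : V, ∃ k : ℕ, (fun o : Option V => o.bind (par D))^[k] (some v) = some r) ∧
    IsSpanningTree G (parentGraph (par D)) := by
  have run : IsMergingRun G par rid := ⟨hupd, hstay⟩
  have hacyc : ∀ v, ¬ TransGen (IsParent (par 0)) v v := fun v hv =>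
    let ⟨k, hk, hkv⟩ := exists_iterate_bind_eq_of_transGen hv
    h0cyc v k hk hkv
  have hroot := exists_root_of_forall_not_transGen hacyc h0rid
  have hmin : ∀ t v, idf r ≤ rid t v := run.le_rid fun v => by
    obtain ⟨w, hw, hvw, -⟩ := hroot v
    rw [hvw, h0root w hw]
    exact hrmin w
  have hr : rid 0 r = idf r := h0root r h0r
  have hridD : ∀ v, rid D v = idf r := fun v => by
    obtain ⟨q, hq⟩ := hG.exists_walk_length_eq_dist v r
    exact (run.stay_of_rid_eq_of_le hmin (hq.trans_le (hD v r))
      (run.rid_walk_length_eq hmin hr q)).2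
  have hchain0 : ∀ v, rid 0 v = idf r →
      ReflTransGen (fun a b => par 0 a = some b ∧ rid 0 a = idf r) v r := by
    intro v hv
    obtain ⟨w, hw, hvw, hchain⟩ := hroot v
    obtain rfl : w = r := hinj ((h0root w hw).symm.trans (hvw.symm.trans hv))
    exact hv ▸ hchain
  have hreach : ∀ v, ReflTransGen (IsParent (par D)) v r := fun v =>
    ReflTransGen.mono (fun _ _ => And.left) _ _
      (run.reflTransGen_of_rid_eq hmin hchain0 D v (hridD v))
  refine ⟨hridD, fun v => exists_iterate_bind_eq_of_reflTransGen (hreach v), ?_⟩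
  exact isSpanningTree_parentGraph (run.adj_of_par_eq_some h0adj D)
    ((run.stay_of_rid_eq_of_le hmin D.zero_le hr).1.trans h0r) hreach

/-- Convergence of the forest-merging phase of algorithm `tree&lead` (Claim 4):
`G` is a finite connected graph with distinct identities `idf`, `r` the vertex of
minimum identity, and `D` a bound on the diameter of `G`.  The initial state
(`par 0`, `rid 0`) is a spanning forest with each tree labeled by the identity of its
root; at each round, every vertex adjacent to a tree with smaller root-id re-attaches
to a neighbor of minimum root-id, adopting that root-id, and all other vertices keep
their state.  Then after `D` rounds every vertex carries root-id `idf r`, every vertex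
reaches `r` by following parent pointers, and the parent edges form a spanning tree
of `G`. -/
theorem treeandlead_merging_converges {V : Type*} [Fintype V] [DecidableEq V]
    (G : SimpleGraph V) (hG : G.Connected)
    (idf : V → ℕ) (hinj : Function.Injective idf)
    (r : V) (hrmin : ∀ v, idf r ≤ idf v)
    (D : ℕ) (hD : ∀ a b : V, G.dist a b ≤ D)
    (par : ℕ → V → Option V) (rid : ℕ → V → ℕ)
    -- initial state: a spanning forest, each tree labeled by its root's id
    (h0cyc : ∀ (v : V) (k : ℕ), 0 < k →
      (fun o : Option V => o.bind (par 0))^[k] (some v) ≠ some v)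
    (h0adj : ∀ v u, par 0 v = some u → G.Adj v u)
    (h0rid : ∀ v u, par 0 v = some u → rid 0 v = rid 0 u)
    (h0root : ∀ v, par 0 v = none → rid 0 v = idf v)
    (h0r : par 0 r = none)
    -- synchronous update rule: every enabled vertex re-attaches to a neighbor of
    -- minimum root-id among its neighbors
    (hupd : ∀ t v, (∃ u, G.Adj v u ∧ rid t u < rid t v) →
      ∃ u, G.Adj v u ∧ (∀ u', G.Adj v u' → rid t u ≤ rid t u') ∧
        par (t + 1) v = some u ∧ rid (t + 1) v = rid t u)
    (hstay : ∀ t v, ¬ (∃ u, G.Adj v u ∧ rid t u < rid t v) →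
      par (t + 1) v = par t v ∧ rid (t + 1) v = rid t v) :
    (∀ v, rid D v = idf r) ∧
    (∀ v : V, ∃ k : ℕ, (fun o : Option V => o.bind (par D))^[k] (some v) = some r) ∧
    IsSpanningTree G (parentGraph (par D)) :=
  treeandlead_merging_converges_general G hG idf hinj r hrmin D hD par rid h0cyc h0adj h0rid h0root
    h0r hupd hstay
end
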